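/- Let w*(m) = ((n(h)−1)/(n(h) − 1/n(m)))·F(m₁,h₂) for m₁ > h₁, m₂ < h₂, where n(z) = 1/(c(1−F(z))). If c ≤ √2/2, then ∂w*/∂m₁ > 0. The key inequality is c²·(1−F(h))·(1 − F(m) + F(m₁,h₂)) ≤ 1, which holds since (1−F(h))(1−F(m)+F(m₁,h₂)) ≤ 2 and c² ≤ 1/2. -/

import Mathlib

/-! Since `0 ≤ 1 - F(h) ≤ 1` and `0 ≤ 1 - F(m) + F(m₁,h₂) ≤ 2`, the bound `c² ≤ 1/2` gives
`c² (1 - F(h)) (1 - F(m) + F(m₁,h₂)) ≤ 1`. Divided by `c (1 - F(h))`, this says that the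
denominator `n(h) - 1/n(m)` of `w*` dominates `c F(m₁,h₂)`. By the quotient rule `∂w*/∂m₁` has
the sign of `(n(h) - 1/n(m)) ∂F(m₁,h₂)/∂m₁ - c F(m₁,h₂) ∂F(m)/∂m₁`, which is positive because
`∂F(m₁,h₂)/∂m₁ > ∂F(m)/∂m₁ > 0`. -/

theorem sq_le_half_of_le_sqrt_two_div_two {c : ℝ} (hc : 0 ≤ c) (h : c ≤ √2 / 2) :
    c ^ 2 ≤ 1 / 2 := by
  have hsq : √2 ^ 2 = 2 := Real.sq_sqrt zero_le_two
  nlinarith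

theorem sq_mul_mul_le_one {c a b : ℝ} (hc : c ^ 2 ≤ 1 / 2) (ha₀ : 0 ≤ a) (ha₁ : a ≤ 1)
    (hb₀ : 0 ≤ b) (hb₂ : b ≤ 2) : c ^ 2 * a * b ≤ 1 :=
  calc c ^ 2 * a * b ≤ 1 / 2 * 1 * 2 := by gcongr
    _ = 1 := by norm_num

theorem HasDerivAt.div_affine_mul {G H : ℝ → ℝ} {x g' h' A K c : ℝ}
    (hG : HasDerivAt G g' x) (hH : HasDerivAt H h' x) (hden : K - c * (1 - G x) ≠ 0) :
    HasDerivAt (fun t => A / (K - c * (1 - G t)) * H t)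
      (A * ((K - c * (1 - G x)) * h' - c * g' * H x) / (K - c * (1 - G x)) ^ 2) x := by
  have hD : HasDerivAt (fun t => K - c * (1 - G t)) (c * g') x := by
    simpa using ((hG.const_sub 1).const_mul c).const_sub K
  refine (((hasDerivAt_const x A).div hD hden).mul hH).congr_deriv ?_
  rw [Pi.div_apply]
  field_simp
  ring

theorem stmt13_general (F : ℝ → ℝ → ℝ) (h1 h2 c m1 m2 dm dh : ℝ)
    (hc : 0 < c) (hc2 : c ≤ Real.sqrt 2 / 2)
    (hFh0 : 0 ≤ F h1 h2) (hFh1 : F h1 h2 < 1)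
    (hFm0 : 0 ≤ F m1 m2) (hFm1 : F m1 m2 ≤ F m1 h2) (hFmh : F m1 h2 ≤ 1)
    (hdm : HasDerivAt (fun t => F t m2) dm m1)
    (hdh : HasDerivAt (fun t => F t h2) dh m1)
    (hdm0 : 0 < dm) (hdmdh : dm < dh) :
    c ^ 2 * (1 - F h1 h2) * (1 - F m1 m2 + F m1 h2) ≤ 1
      ∧ ∀ D : ℝ,
          HasDerivAt
            (fun t =>
              ((1 / (c * (1 - F h1 h2)) - 1) / (1 / (c * (1 - F h1 h2)) - c * (1 - F t m2)))
                * F t h2) D m1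
          → 0 < D := by
  have hc12 := sq_le_half_of_le_sqrt_two_div_two hc.le hc2
  have key := sq_mul_mul_le_one (a := 1 - F h1 h2) (b := 1 - F m1 m2 + F m1 h2) hc12
    (by linarith) (by linarith) (by linarith) (by linarith)
  refine ⟨key, fun D hD => ?_⟩
  set K := 1 / (c * (1 - F h1 h2))
  have hcF : 0 < c * (1 - F h1 h2) := mul_pos hc (by linarith)
  have hc1 : c < 1 := by nlinarith
  have hK1 : 1 < K := one_lt_one_div hcF (by nlinarith)
  have hden_ge : c * F m1 h2 ≤ K - c * (1 - F m1 m2) := by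
    have : c * (1 - F m1 m2 + F m1 h2) ≤ K := by
      rw [le_div_iff₀ hcF]
      nlinarith
    linarith
  have hden_pos : 0 < K - c * (1 - F m1 m2) := by nlinarith
  rw [hD.unique (hdm.div_affine_mul hdh hden_pos.ne')]
  refine div_pos (mul_pos (by linarith) ?_) (by positivity)
  nlinarith [mul_lt_mul_of_pos_left hdmdh hden_pos, mul_le_mul_of_nonneg_right hden_ge hdm0.le]

/-- Let w*(m) = ((n(h)−1)/(n(h) − 1/n(m)))·F(m₁,h₂) for m₁ > h₁,
m₂ < h₂, n(z) = 1/(c(1−F(z))). If c ≤ √2/2, then the key inequality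
c²(1−F(h))(1 − F(m) + F(m₁,h₂)) ≤ 1 holds and ∂w*/∂m₁ > 0. -/
theorem stmt13 (F f : ℝ → ℝ → ℝ) (h1 h2 c m1 m2 dm dh : ℝ)
    (hc : 0 < c) (hc2 : c ≤ Real.sqrt 2 / 2)
    (hh1 : h1 ∈ Set.Ioo (0:ℝ) 1) (hh2 : h2 ∈ Set.Ioo (0:ℝ) 1)
    (hm1 : h1 < m1) (hm1le : m1 ≤ 1) (hm2 : m2 < h2) (hm2nn : 0 ≤ m2)
    (hFh0 : 0 ≤ F h1 h2) (hFh1 : F h1 h2 < 1)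
    (hFm0 : 0 ≤ F m1 m2) (hFm1 : F m1 m2 ≤ F m1 h2) (hFmh : F m1 h2 ≤ 1)
    (hdm : HasDerivAt (fun t => F t m2) dm m1)
    (hdh : HasDerivAt (fun t => F t h2) dh m1)
    (hdm0 : 0 < dm) (hdmdh : dm < dh) :
    c ^ 2 * (1 - F h1 h2) * (1 - F m1 m2 + F m1 h2) ≤ 1
      ∧ ∀ D : ℝ,
          HasDerivAt
            (fun t =>
              ((1 / (c * (1 - F h1 h2)) - 1) / (1 / (c * (1 - F h1 h2)) - c * (1 - F t m2)))
                * F t h2) D m1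
          → 0 < D :=
  stmt13_general F h1 h2 c m1 m2 dm dh hc hc2 hFh0 hFh1 hFm0 hFm1 hFmh hdm hdh hdm0 hdmdh
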